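/- arXiv:1909.12581 — 4 statements merged into one kernel-verified Lean document; each statement's English description precedes it below -/
import Mathlib

section
/- Let ξ > 0 and let E₁ denote the exponential integral E₁(x) = ∫_x^∞ e^{−t}/t dt. For every nonzero r ∈ ℝ², the function k ↦ (1/|k|⁴)·[(1 + |k|²/(4ξ²)) e^{−|k|²/(4ξ²)} − 1]·e^{i k·r} is absolutely integrable over ℝ² (k = 0 being a removable singularity), and (1/(4π²)) ∫_{ℝ²} (1/|k|⁴)·[(1 + |k|²/(4ξ²)) e^{−|k|²/(4ξ²)} − 1]·e^{i k·r} dk = (1/(16π ξ²))·( ξ²|r|² E₁(ξ²|r|²) − e^{−ξ²|r|²} ). In particular the left-hand side is real and depends only on |r|. -/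
/-!
For `k ≠ 0` the screened symbol is a superposition of Gaussians,
`|k|⁻⁴ (γ̂(k, ξ) - 1) = -∫₀^{1/(4ξ²)} t e^{-t|k|²} dt`.
The resulting double integral converges absolutely (the `L¹` norm `π / t` of each Gaussian
cancels the weight `t`), so by Fubini and the Fourier transform of a Gaussian the
`k`-integral becomes `-π ∫₀^{1/(4ξ²)} e^{-|r|²/(4t)} dt`. Finally
`u e^{-c/u} - c E₁(c/u)` is an antiderivative of `e^{-c/u}` which tends to `0` as `u → 0⁺`,
since `0 ≤ c E₁(c/u) ≤ u e^{-c/u}`.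
-/

open MeasureTheory Real

/-- The exponential integral `E₁(x) = ∫_x^∞ e^{-t}/t dt`. -/
noncomputable def expInt (x : ℝ) : ℝ := ∫ t in Set.Ioi x, Real.exp (-t) / t

open Set Filter Topology

section ExpInt

variable {x : ℝ}

lemma integrableOn_exp_neg_div_Ioi (hx : 0 < x) :
    IntegrableOn (fun t : ℝ => exp (-t) / t) (Ioi x) := by
  refine ((integrableOn_exp_neg_Ioi x).div_const x).mono' ?_ ?_
  · exact (by fun_prop : Measurable fun t : ℝ => exp (-t) / t).aestronglyMeasurable
  · filter_upwards [ae_restrict_mem measurableSet_Ioi] with t (ht : x < t)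
    rw [norm_of_nonneg (by have := hx.trans ht; positivity)]
    exact div_le_div_of_nonneg_left (exp_pos _).le hx ht.le

lemma expInt_nonneg (hx : 0 ≤ x) : 0 ≤ expInt x :=
  setIntegral_nonneg measurableSet_Ioi fun t (ht : x < t) => by
    have := hx.trans_lt ht; positivity

lemma expInt_le_exp_neg_div (hx : 0 < x) : expInt x ≤ exp (-x) / x :=
  calc expInt x ≤ ∫ t in Ioi x, exp (-t) / x :=
        setIntegral_mono_on (integrableOn_exp_neg_div_Ioi hx)
          ((integrableOn_exp_neg_Ioi x).div_const x) measurableSet_Ioi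
          fun t (ht : x < t) => div_le_div_of_nonneg_left (exp_pos _).le hx ht.le
    _ = exp (-x) / x := by rw [integral_div, integral_exp_neg_Ioi]

lemma hasDerivAt_expInt (hx : 0 < x) : HasDerivAt expInt (-(exp (-x) / x)) x := by
  have hcont : ∀ t ≠ 0, ContinuousAt (fun t : ℝ => exp (-t) / t) t := fun t ht =>
    (continuous_exp.comp continuous_neg).continuousAt.div continuousAt_id ht
  have hsplit : ∀ u ∈ Ioo 0 (x + 1),
      expInt u = (∫ t in u..x + 1, exp (-t) / t) + expInt (x + 1) := fun u hu => by
    rw [intervalIntegral.integral_of_le hu.2.le, expInt, expInt,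
      ← setIntegral_union (Ioc_disjoint_Ioi le_rfl) measurableSet_Ioi
        ((integrableOn_exp_neg_div_Ioi hu.1).mono_set Ioc_subset_Ioi_self)
        (integrableOn_exp_neg_div_Ioi (by linarith)), Ioc_union_Ioi_eq_Ioi hu.2.le]
  have hint : IntervalIntegrable (fun t : ℝ => exp (-t) / t) volume x (x + 1) :=
    ContinuousOn.intervalIntegrable fun t ht => by
      rw [uIcc_of_le (by linarith)] at ht
      exact (hcont t (by linarith [ht.1])).continuousWithinAt
  have hmeas : Measurable fun t : ℝ => exp (-t) / t := by fun_prop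
  refine ((intervalIntegral.integral_hasDerivAt_left hint
    hmeas.aestronglyMeasurable.stronglyMeasurableAtFilter
    (hcont x hx.ne')).add_const (expInt (x + 1))).congr_of_eventuallyEq ?_
  filter_upwards [Ioo_mem_nhds hx (lt_add_one x)] with u hu using hsplit u hu

end ExpInt

section Antiderivative

variable {c : ℝ}

lemma hasDerivAt_mul_exp_neg_div_sub_mul_expInt (hc : 0 < c) {t : ℝ} (ht : 0 < t) :
    HasDerivAt (fun u => u * exp (-(c / u)) - c * expInt (c / u)) (exp (-(c / t))) t := by
  have hdiv : HasDerivAt (fun u => c / u) (-(c / t ^ 2)) t := by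
    simpa [div_eq_mul_inv] using (hasDerivAt_inv ht.ne').const_mul c
  refine (((hasDerivAt_id' t).mul hdiv.neg.exp).sub
    (((hasDerivAt_expInt (by positivity : 0 < c / t)).comp t hdiv).const_mul c)).congr_deriv ?_
  simp only [Pi.neg_apply]
  field_simp
  ring

lemma mul_exp_neg_div_sub_mul_expInt_mem_Icc (hc : 0 < c) {u : ℝ} (hu : 0 < u) :
    u * exp (-(c / u)) - c * expInt (c / u) ∈ Icc 0 u := by
  have hcu : 0 < c / u := by positivity
  have hupper : c * expInt (c / u) ≤ u * exp (-(c / u)) :=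
    calc c * expInt (c / u) ≤ c * (exp (-(c / u)) / (c / u)) :=
          mul_le_mul_of_nonneg_left (expInt_le_exp_neg_div hcu) hc.le
      _ = u * exp (-(c / u)) := by field_simp
  have hexp : exp (-(c / u)) ≤ 1 := exp_le_one_iff.mpr (neg_nonpos.mpr hcu.le)
  have hlower : 0 ≤ c * expInt (c / u) := mul_nonneg hc.le (expInt_nonneg hcu.le)
  constructor <;> nlinarith

lemma tendsto_mul_exp_neg_div_sub_mul_expInt_nhdsGT_zero (hc : 0 < c) :
    Tendsto (fun u => u * exp (-(c / u)) - c * expInt (c / u)) (𝓝[>] 0) (𝓝 0) := by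
  have hmem : ∀ᶠ u in 𝓝[>] (0 : ℝ), u * exp (-(c / u)) - c * expInt (c / u) ∈ Icc 0 u :=
    eventually_mem_nhdsWithin.mono fun u hu => mul_exp_neg_div_sub_mul_expInt_mem_Icc hc hu
  exact tendsto_of_tendsto_of_tendsto_of_le_of_le' tendsto_const_nhds
    (tendsto_nhdsWithin_of_tendsto_nhds tendsto_id) (hmem.mono fun _ h => h.1)
    (hmem.mono fun _ h => h.2)

lemma integral_exp_neg_div_Ioc (hc : 0 ≤ c) {a : ℝ} (ha : 0 < a) :
    ∫ t in Ioc 0 a, exp (-(c / t)) = a * exp (-(c / a)) - c * expInt (c / a) := by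
  rcases hc.eq_or_lt with rfl | hc
  · simp [ha.le]
  have hint : IntervalIntegrable (fun t => exp (-(c / t))) volume 0 a := by
    refine (intervalIntegrable_iff_integrableOn_Ioc_of_le ha.le).mpr
      (Measure.integrableOn_of_bounded (M := 1) measure_Ioc_lt_top.ne
        (by fun_prop : Measurable fun t => exp (-(c / t))).aestronglyMeasurable ?_)
    filter_upwards [ae_restrict_mem measurableSet_Ioc] with t ht
    rw [norm_of_nonneg (exp_pos _).le, exp_le_one_iff, neg_nonpos]
    exact div_nonneg hc.le ht.1.le
  rw [← intervalIntegral.integral_of_le ha.le,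
    intervalIntegral.integral_eq_sub_of_hasDerivAt_of_tendsto ha
      (fun t ht => hasDerivAt_mul_exp_neg_div_sub_mul_expInt hc ht.1) hint
      (tendsto_mul_exp_neg_div_sub_mul_expInt_nhdsGT_zero hc)
      (hasDerivAt_mul_exp_neg_div_sub_mul_expInt hc ha).continuousAt.continuousWithinAt,
    sub_zero]

end Antiderivative

lemma integral_mul_exp_neg_mul {q : ℝ} (hq : q ≠ 0) (a : ℝ) :
    ∫ t in (0)..a, t * exp (-(t * q)) = (1 - (1 + a * q) * exp (-(a * q))) / q ^ 2 := by
  have hderiv : ∀ t ∈ uIcc 0 a,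
      HasDerivAt (fun t => -((1 + t * q) * exp (-(t * q))) / q ^ 2) (t * exp (-(t * q))) t := by
    intro t _
    refine (((((hasDerivAt_id' t).mul_const q).const_add 1).mul
      ((hasDerivAt_id' t).mul_const q).neg.exp).neg.div_const (q ^ 2)).congr_deriv ?_
    simp only [Pi.neg_apply]
    field_simp
    ring
  rw [intervalIntegral.integral_eq_sub_of_hasDerivAt hderiv
    ((by fun_prop : Continuous fun t => t * exp (-(t * q))).intervalIntegrable 0 a)]
  simp only [zero_mul, neg_zero, exp_zero, add_zero, mul_one]
  ring

section Fourier

open scoped Complex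

local notation "ℝ²" => EuclideanSpace ℝ (Fin 2)

noncomputable def gaussianWave (r : ℝ²) (t : ℝ) (k : ℝ²) : ℂ :=
  ((t * exp (-(t * ‖k‖ ^ 2)) : ℝ) : ℂ) * cexp (Complex.I * ((inner ℝ k r : ℝ) : ℂ))

noncomputable def hasimotoIntegrand (ξ : ℝ) (r k : ℝ²) : ℂ :=
  (((1 / ‖k‖ ^ 4) *
      ((1 + ‖k‖ ^ 2 / (4 * ξ ^ 2)) * exp (-‖k‖ ^ 2 / (4 * ξ ^ 2)) - 1) : ℝ) : ℂ)
    * cexp (Complex.I * ((inner ℝ k r : ℝ) : ℂ))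

variable (r : ℝ²)

lemma continuous_gaussianWave : Continuous (Function.uncurry (gaussianWave r)) := by
  unfold gaussianWave
  fun_prop

lemma norm_gaussianWave (t : ℝ) (k : ℝ²) :
    ‖gaussianWave r t k‖ = |t| * exp (-(t * ‖k‖ ^ 2)) := by
  rw [gaussianWave, norm_mul, Complex.norm_exp_I_mul_ofReal, mul_one, Complex.norm_real,
    norm_mul, norm_of_nonneg (exp_pos _).le, Real.norm_eq_abs]

lemma gaussianWave_eq (t : ℝ) (k : ℝ²) : gaussianWave r t k =
    t * cexp (-t * ‖k‖ ^ 2 + Complex.I * ((inner ℝ r k : ℝ) : ℂ)) := by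
  rw [gaussianWave, real_inner_comm, neg_mul, Complex.exp_add]
  push_cast
  ring

lemma integral_gaussianWave {t : ℝ} (ht : 0 < t) :
    ∫ k, gaussianWave r t k = ((π * exp (-(‖r‖ ^ 2 / 4 / t)) : ℝ) : ℂ) := by
  simp_rw [gaussianWave_eq]
  rw [integral_const_mul, GaussianFourier.integral_cexp_neg_mul_sq_norm_add
    (by simpa using ht) Complex.I r, finrank_euclideanSpace_fin]
  have ht' : (t : ℂ) ≠ 0 := Complex.ofReal_ne_zero.mpr ht.ne'
  push_cast
  norm_num [Complex.I_sq]
  field_simp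

lemma integral_norm_gaussianWave {t : ℝ} (ht : 0 < t) : ∫ k, ‖gaussianWave r t k‖ = π := by
  simp_rw [norm_gaussianWave, abs_of_pos ht, integral_const_mul, ← neg_mul,
    GaussianFourier.integral_rexp_neg_mul_sq_norm ht, finrank_euclideanSpace_fin]
  norm_num
  field_simp

lemma integrable_gaussianWave {t : ℝ} (ht : 0 < t) : Integrable (gaussianWave r t) := by
  simp_rw [funext (gaussianWave_eq r t)]
  exact (GaussianFourier.integrable_cexp_neg_mul_sq_norm_add (by simpa using ht) _ r).const_mul _

lemma integrable_uncurry_gaussianWave (a : ℝ) :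
    Integrable (Function.uncurry (gaussianWave r))
      ((volume.restrict (Ioc 0 a)).prod volume) := by
  rw [integrable_prod_iff (continuous_gaussianWave r).aestronglyMeasurable]
  refine ⟨?_, (integrableOn_const (C := π) measure_Ioc_lt_top.ne).congr ?_⟩ <;>
    filter_upwards [ae_restrict_mem measurableSet_Ioc] with t ht
  · exact integrable_gaussianWave r ht.1
  · exact (integral_norm_gaussianWave r ht.1).symm

lemma hasimotoIntegrand_eq_neg_integral (ξ : ℝ) {k : ℝ²} (hk : k ≠ 0) :
    hasimotoIntegrand ξ r k = -∫ t in Ioc 0 (1 / (4 * ξ ^ 2)), gaussianWave r t k := by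
  have hsymbol :
      1 / ‖k‖ ^ 4 * ((1 + ‖k‖ ^ 2 / (4 * ξ ^ 2)) * exp (-‖k‖ ^ 2 / (4 * ξ ^ 2)) - 1)
        = -∫ t in (0)..1 / (4 * ξ ^ 2), t * exp (-(t * ‖k‖ ^ 2)) := by
    rw [integral_mul_exp_neg_mul (by positivity), neg_div, ← one_div_mul_eq_div (4 * ξ ^ 2)]
    ring
  rw [hasimotoIntegrand, hsymbol, intervalIntegral.integral_of_le (by positivity),
    Complex.ofReal_neg, ← integral_complex_ofReal, neg_mul, ← integral_mul_const]
  rfl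

theorem integrable_hasimotoIntegrand_and_integral_eq (ξ : ℝ) :
    Integrable (hasimotoIntegrand ξ r) ∧ ∫ k, hasimotoIntegrand ξ r k =
      -(π * ∫ t in Ioc 0 (1 / (4 * ξ ^ 2)), exp (-(‖r‖ ^ 2 / 4 / t)) : ℝ) := by
  have hF := integrable_uncurry_gaussianWave r (1 / (4 * ξ ^ 2))
  have hae : hasimotoIntegrand ξ r =ᵐ[volume]
      fun k => -∫ t in Ioc 0 (1 / (4 * ξ ^ 2)), gaussianWave r t k := by
    filter_upwards [Measure.ae_ne volume 0] with k hk
    exact hasimotoIntegrand_eq_neg_integral r ξ hk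
  refine ⟨hF.integral_prod_right.neg.congr hae.symm, ?_⟩
  rw [integral_congr_ae hae, integral_neg, ← integral_integral_swap hF,
    setIntegral_congr_fun measurableSet_Ioc fun t ht => integral_gaussianWave r ht.1,
    integral_complex_ofReal, integral_const_mul]

end Fourier

theorem biharmonic_real_space_part_general (ξ : ℝ) (hξ : 0 < ξ)
    (r : EuclideanSpace ℝ (Fin 2)) :
    Integrable (fun k : EuclideanSpace ℝ (Fin 2) =>
      (((1 / ‖k‖ ^ 4) *
        ((1 + ‖k‖ ^ 2 / (4 * ξ ^ 2)) * Real.exp (-‖k‖ ^ 2 / (4 * ξ ^ 2)) - 1) : ℝ) : ℂ)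
        * Complex.exp (Complex.I * ((inner ℝ k r : ℝ) : ℂ))) ∧
    (1 / (4 * (π : ℂ) ^ 2)) *
      (∫ k : EuclideanSpace ℝ (Fin 2),
        (((1 / ‖k‖ ^ 4) *
          ((1 + ‖k‖ ^ 2 / (4 * ξ ^ 2)) * Real.exp (-‖k‖ ^ 2 / (4 * ξ ^ 2)) - 1) : ℝ) : ℂ)
          * Complex.exp (Complex.I * ((inner ℝ k r : ℝ) : ℂ)))
      = (((1 / (16 * π * ξ ^ 2)) *
          (ξ ^ 2 * ‖r‖ ^ 2 * expInt (ξ ^ 2 * ‖r‖ ^ 2)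
            - Real.exp (-(ξ ^ 2 * ‖r‖ ^ 2))) : ℝ) : ℂ) := by
  show Integrable (hasimotoIntegrand ξ r) ∧
    1 / (4 * (π : ℂ) ^ 2) * ∫ k, hasimotoIntegrand ξ r k = _
  obtain ⟨hint, hval⟩ := integrable_hasimotoIntegrand_and_integral_eq r ξ
  have hc : ‖r‖ ^ 2 / 4 / (1 / (4 * ξ ^ 2)) = ξ ^ 2 * ‖r‖ ^ 2 := by field_simp
  refine ⟨hint, ?_⟩
  rw [hval, integral_exp_neg_div_Ioc (by positivity) (by positivity), hc]
  norm_cast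
  field_simp
  ring

/-- Real-space part of the Ewald decomposition of the biharmonic Green's function
with the Hasimoto screening function. -/
theorem biharmonic_real_space_part (ξ : ℝ) (hξ : 0 < ξ)
    (r : EuclideanSpace ℝ (Fin 2)) (hr : r ≠ 0) :
    Integrable (fun k : EuclideanSpace ℝ (Fin 2) =>
      (((1 / ‖k‖ ^ 4) *
        ((1 + ‖k‖ ^ 2 / (4 * ξ ^ 2)) * Real.exp (-‖k‖ ^ 2 / (4 * ξ ^ 2)) - 1) : ℝ) : ℂ)
        * Complex.exp (Complex.I * ((inner ℝ k r : ℝ) : ℂ))) ∧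
    (1 / (4 * (π : ℂ) ^ 2)) *
      (∫ k : EuclideanSpace ℝ (Fin 2),
        (((1 / ‖k‖ ^ 4) *
          ((1 + ‖k‖ ^ 2 / (4 * ξ ^ 2)) * Real.exp (-‖k‖ ^ 2 / (4 * ξ ^ 2)) - 1) : ℝ) : ℂ)
          * Complex.exp (Complex.I * ((inner ℝ k r : ℝ) : ℂ)))
      = (((1 / (16 * π * ξ ^ 2)) *
          (ξ ^ 2 * ‖r‖ ^ 2 * expInt (ξ ^ 2 * ‖r‖ ^ 2)
            - Real.exp (-(ξ ^ 2 * ‖r‖ ^ 2))) : ℝ) : ℂ) :=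
  biharmonic_real_space_part_general ξ hξ r
end

section
/- For every z ∈ ℂ that does not lie on the real segment [−1,1], the integral ∫_{−1}^{1} 1/(t − z) dt (over real t) equals Log(1 − z) − Log(−1 − z), where Log is the principal branch of the complex logarithm. -/
open Complex intervalIntegral in
private lemma sq_aux_log_neg (r : ℝ) (hr : r < 0) :
    Complex.log (r : ℂ) = Real.log (-r) + Real.pi * Complex.I := by
  rw [Complex.log, Complex.arg_ofReal_of_neg hr, Complex.norm_real, Real.norm_eq_abs,
    abs_of_neg hr]

/-- Base case `p₀(z) = ∫_{-1}^1 dt/(t-z) = Log(1-z) - Log(-1-z)` for `z ∉ [-1,1]`. -/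
theorem special_quadrature_p0 (z : ℂ)
    (hz : ∀ t : ℝ, t ∈ Set.Icc (-1 : ℝ) 1 → (t : ℂ) ≠ z) :
    (∫ t in (-1 : ℝ)..1, 1 / ((t : ℂ) - z))
      = Complex.log (1 - z) - Complex.log (-1 - z) := by
  have huIcc : Set.uIcc (-1 : ℝ) 1 = Set.Icc (-1 : ℝ) 1 := by
    rw [Set.uIcc_of_le]; norm_num
  have hne : ∀ t ∈ Set.uIcc (-1 : ℝ) 1, (t : ℂ) - z ≠ 0 := by
    intro t ht
    rw [huIcc] at ht
    exact sub_ne_zero.mpr (hz t ht)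
  have hint : IntervalIntegrable (fun t : ℝ => 1 / ((t : ℂ) - z))
      MeasureTheory.volume (-1 : ℝ) 1 := by
    apply ContinuousOn.intervalIntegrable
    exact ContinuousOn.div continuousOn_const
      ((Complex.continuous_ofReal.continuousOn).sub continuousOn_const) hne
  by_cases hcase : z.im = 0 ∧ 1 < z.re
  · -- z is real with re > 1; use antiderivative Log (z - t)
    obtain ⟨him, hre⟩ := hcase
    have key : ∀ t ∈ Set.uIcc (-1 : ℝ) 1,
        HasDerivAt (fun s : ℝ => Complex.log (z - (s : ℂ))) (1 / ((t : ℂ) - z)) t := by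
      intro t ht
      rw [huIcc] at ht
      have hslit : z - (t : ℂ) ∈ Complex.slitPlane := by
        rw [Complex.mem_slitPlane_iff]
        left
        simp only [Complex.sub_re, Complex.ofReal_re]
        linarith [ht.2]
      have h1 : HasDerivAt (fun w : ℂ => Complex.log (z - w))
          ((z - (t : ℂ))⁻¹ * (-1)) (t : ℂ) :=
        (Complex.hasDerivAt_log hslit).comp _ ((hasDerivAt_id _).const_sub z)
      have := h1.comp_ofReal
      convert this using 1
      have hzt : z - (t : ℂ) ≠ 0 := by
        rw [sub_ne_zero]; exact fun h => hz t ht h.symm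
      rw [mul_neg_one, ← inv_neg, neg_sub, one_div]
    have := intervalIntegral.integral_eq_sub_of_hasDerivAt key hint
    rw [this]
    -- now prove Log(z-1) - Log(z+1) = Log(1-z) - Log(-1-z)
    push_cast
    have hz1 : (1 : ℂ) - z = ((1 - z.re : ℝ) : ℂ) := by
      apply Complex.ext <;> simp [him]
    have hz2 : (-1 : ℂ) - z = ((-1 - z.re : ℝ) : ℂ) := by
      apply Complex.ext <;> simp [him]
    have hz3 : z - 1 = ((z.re - 1 : ℝ) : ℂ) := by
      apply Complex.ext <;> simp [him]
    have hz4 : z - (-1) = ((z.re + 1 : ℝ) : ℂ) := by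
      apply Complex.ext <;> simp [him]
    rw [hz1, hz2, hz3, hz4,
      sq_aux_log_neg _ (by linarith : (1 : ℝ) - z.re < 0),
      sq_aux_log_neg _ (by linarith : (-1 : ℝ) - z.re < 0),
      ← Complex.ofReal_log (by linarith : (0:ℝ) ≤ z.re - 1),
      ← Complex.ofReal_log (by linarith : (0:ℝ) ≤ z.re + 1)]
    have : (-(1:ℝ) - z.re) = -(z.re + 1) := by ring
    rw [this]
    have : (1:ℝ) - z.re = -(z.re - 1) := by ring
    rw [this]
    rw [neg_neg, neg_neg]
    ring
  · -- t - z stays in the slit plane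
    have key : ∀ t ∈ Set.uIcc (-1 : ℝ) 1,
        HasDerivAt (fun s : ℝ => Complex.log ((s : ℂ) - z)) (1 / ((t : ℂ) - z)) t := by
      intro t ht
      rw [huIcc] at ht
      have hslit : (t : ℂ) - z ∈ Complex.slitPlane := by
        rw [Complex.mem_slitPlane_iff]
        rcases eq_or_ne z.im 0 with him | him
        · left
          simp only [Complex.sub_re, Complex.ofReal_re]
          have : ¬ (1 < z.re) := fun h => hcase ⟨him, h⟩
          have hzr : z.re < -1 ∨ 1 < z.re := by
            by_contra h
            push_neg at h
            exact hz z.re ⟨h.1, h.2⟩ (by apply Complex.ext <;> simp [him])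
          rcases hzr with h | h
          · linarith [ht.1]
          · exact absurd h this
        · right
          simp [him]
      have h1 : HasDerivAt (fun w : ℂ => Complex.log (w - z))
          (((t : ℂ) - z)⁻¹ * 1) (t : ℂ) :=
        by have := (Complex.hasDerivAt_log hslit).comp (t : ℂ) ((hasDerivAt_id' (x := (t : ℂ))).sub_const z); exact this
      have := h1.comp_ofReal
      convert this using 1
      rw [mul_one, one_div]
    have := intervalIntegral.integral_eq_sub_of_hasDerivAt key hint
    rw [this]
    push_cast
    ring_nf
end

section
/- Let z : ℝ → ℂ be a parametrised curve that is twice differentiable at s with z′(s) ≠ 0. Then the double-layer kernel Im( z′(s) / (z(s) − z(t)) ) has a finite diagonal limit: lim_{t → s} Im( z′(s) / (z(s) − z(t)) ) = Im( z″(s) / (2 z′(s)) ). -/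
/-!
Write `w = slope z s t` and `q = (t - s)⁻¹ • (w - z'(s))`. Eliminating `z'(s) = w - (t - s) q` gives
`z'(s) / (z(s) - z(t)) = q / w - 1 / (t - s)`, and the singular term `1 / (t - s)` is real, so it
drops out of the imaginary part. As `t → s`, `w → z'(s)` and, by second-order Taylor expansion,
`q → z''(s) / 2`.
-/

open Filter Topology

section SecondOrder

variable {E : Type*} [NormedAddCommGroup E] [NormedSpace ℝ E] {f f' : ℝ → E} {f'' : E} {x : ℝ}

theorem isLittleO_sub_taylor_two (hf : ∀ᶠ y in 𝓝 x, HasDerivAt f (f' y) y)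
    (hf' : HasDerivAt f' f'' x) :
    (fun y => f y - f x - (y - x) • f' x - ((y - x) ^ 2 / 2) • f'') =o[𝓝 x]
      fun y => (y - x) ^ 2 := by
  -- The remainder has derivative `o(y - x)` by `hf'`; the mean value inequality on a ball
  -- around `x` turns this into `o((y - x) ^ 2)` for the remainder itself.
  obtain ⟨ε, hε, hball⟩ := Metric.eventually_nhds_iff_ball.mp hf
  have hU : 𝓝[Metric.ball x ε] x = 𝓝 x := nhdsWithin_eq_nhds.mpr (Metric.ball_mem_nhds x hε)
  have hg : ∀ y ∈ Metric.ball x ε, HasDerivWithinAt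
      (fun y => f y - (y - x) • f' x - ((y - x) ^ 2 / 2) • f'')
      (f' y - f' x - (y - x) • f'') (Metric.ball x ε) y := by
    intro y hy
    have hlin := ((hasDerivAt_id y).sub_const x).smul_const (f' x)
    have hquad := ((((hasDerivAt_id y).sub_const x).pow 2).div_const 2).smul_const f''
    refine (((hball y hy).sub hlin).sub hquad).hasDerivWithinAt.congr_deriv ?_
    simp only [id, one_smul]
    congr 2
    ring
  have hg' : (fun y => f' y - f' x - (y - x) • f'') =o[𝓝[Metric.ball x ε] x]
      fun y => (y - x) ^ 1 := by
    simpa [hU] using hf'.isLittleO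
  have := (convex_ball x ε).isLittleO_pow_succ_real (Metric.mem_ball_self hε) hg hg'
  rw [hU] at this
  convert this using 2 with y
  simp only [sub_self, zero_smul, sub_zero, ne_eq, OfNat.ofNat_ne_zero, not_false_eq_true,
    zero_pow, zero_div]
  abel

theorem tendsto_inv_smul_slope_sub (hf : ∀ᶠ y in 𝓝 x, HasDerivAt f (f' y) y)
    (hf' : HasDerivAt f' f'' x) :
    Tendsto (fun y => (y - x)⁻¹ • (slope f x y - f' x)) (𝓝[≠] x) (𝓝 ((2 : ℝ)⁻¹ • f'')) := by
  have h := ((isLittleO_sub_taylor_two hf hf').tendsto_inv_smul_nhds_zero).mono_left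
    (nhdsWithin_le_nhds (s := {x}ᶜ))
  rw [← tendsto_sub_nhds_zero_iff]
  refine h.congr' ?_
  filter_upwards [self_mem_nhdsWithin] with y (hy : y ≠ x)
  have hy' : y - x ≠ 0 := sub_ne_zero.mpr hy
  rw [slope_def_module]
  match_scalars <;> field_simp

end SecondOrder

theorem Complex.im_inv_smul_slope_sub_div_slope {z : ℝ → ℂ} {s t : ℝ} (c : ℂ) (ht : t ≠ s)
    (hz : slope z s t ≠ 0) :
    ((t - s)⁻¹ • (slope z s t - c) / slope z s t).im = (c / (z s - z t)).im := by
  have hts : ((t : ℂ) - s) ≠ 0 := sub_ne_zero.mpr (Complex.ofReal_injective.ne ht)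
  have hzts : z t - z s ≠ 0 := fun h => hz (by simp [slope_def_module, h])
  have hzst : z s - z t ≠ 0 := by rwa [← neg_sub, neg_ne_zero]
  have key : (t - s)⁻¹ • (slope z s t - c) / slope z s t
      = c / (z s - z t) + (((t - s)⁻¹ : ℝ) : ℂ) := by
    simp only [slope_def_module, Complex.real_smul]
    push_cast
    field_simp
    ring
  rw [key, Complex.add_im, Complex.ofReal_im, add_zero]

/-- Finite diagonal limit of the kernel `M⁽¹⁾`:
`Im(z'(s)/(z(s)-z(t))) → Im(z''(s)/(2z'(s)))` as `t → s`. -/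
theorem double_layer_kernel_M1_diagonal_limit (z z' : ℝ → ℂ) (z'' : ℂ) (s : ℝ)
    (hz : ∀ᶠ t in nhds s, HasDerivAt z (z' t) t)
    (hz'' : HasDerivAt z' z'' s) (h0 : z' s ≠ 0) :
    Filter.Tendsto (fun t : ℝ => (z' s / (z s - z t)).im)
      (nhdsWithin s {s}ᶜ) (nhds ((z'' / (2 * z' s)).im)) := by
  have hslope : Tendsto (slope z s) (𝓝[≠] s) (𝓝 (z' s)) :=
    hasDerivAt_iff_tendsto_slope.mp hz.self_of_nhds
  have hlim := (Complex.continuous_im.tendsto _).comp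
    ((tendsto_inv_smul_slope_sub hz hz'').div hslope h0)
  have hval : (2 : ℝ)⁻¹ • z'' / z' s = z'' / (2 * z' s) := by
    rw [Complex.real_smul]
    push_cast
    ring
  rw [hval] at hlim
  refine hlim.congr' ?_
  filter_upwards [self_mem_nhdsWithin, hslope.eventually_ne h0] with t (ht : t ≠ s) hzt
  exact Complex.im_inv_smul_slope_sub_div_slope (z' s) ht hzt
end

section
/- Let z : ℝ → ℂ be a parametrised curve that is twice differentiable at s with z′(s) ≠ 0. Then lim_{t → s} Im( z′(s)·( conj(z(s)) − conj(z(t)) ) ) / ( conj(z(s)) − conj(z(t)) )² = Im( z″(s)·conj(z′(s)) ) / ( 2·conj(z′(s))² ), where the limit is a limit of complex numbers. -/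
/-! With `D t = conj (z s - z t)`, the numerator `u t = Im (z' s * D t)` is a real function with
`u s = 0`, `u' s = -Im |z' s|² = 0` and `u'' s = Im (z'' * conj (z' s))`, so L'Hôpital gives
`u t / (t - s)² → u'' s / 2`. Since `D t / (t - s) → -conj (z' s) ≠ 0`, the kernel, which is
`u t / D t²`, tends to `(u'' s / 2) / conj (z' s)²`. -/

open Filter Topology Complex
open scoped ComplexConjugate

theorem Filter.Tendsto.div_sq_of_div_sq {α 𝕜 : Type*} [Field 𝕜] [TopologicalSpace 𝕜]
    [T1Space 𝕜] [ContinuousMul 𝕜] [ContinuousInv₀ 𝕜] {l : Filter α} {f g h : α → 𝕜} {a b : 𝕜}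
    (hf : Tendsto (fun x => f x / h x ^ 2) l (𝓝 a)) (hg : Tendsto (fun x => g x / h x) l (𝓝 b))
    (hb : b ≠ 0) : Tendsto (fun x => f x / g x ^ 2) l (𝓝 (a / b ^ 2)) := by
  have hlim := hf.mul ((hg.inv₀ hb).pow 2)
  rw [inv_pow, ← div_eq_mul_inv] at hlim
  refine hlim.congr' ?_
  filter_upwards [hg.eventually_ne hb] with x hx
  have hgx : g x ≠ 0 := fun h0 => hx (by simp [h0])
  have hhx : h x ≠ 0 := fun h0 => hx (by simp [h0])
  field_simp

theorem tendsto_div_sub_sq_nhdsNE {f f' : ℝ → ℝ} {f'' s : ℝ}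
    (hf : ∀ᶠ t in 𝓝 s, HasDerivAt f (f' t) t) (hf' : HasDerivAt f' f'' s)
    (hfs : f s = 0) (hf's : f' s = 0) :
    Tendsto (fun t => f t / (t - s) ^ 2) (𝓝[≠] s) (𝓝 (f'' / 2)) := by
  refine HasDerivAt.lhopital_zero_nhdsNE (g' := fun t => 2 * (t - s))
    (hf.filter_mono nhdsWithin_le_nhds) ?_ ?_ ?_ ?_ ?_
  · exact .of_forall fun t => by
      simpa using ((hasDerivAt_id' t).sub_const s).fun_pow 2
  · filter_upwards [self_mem_nhdsWithin] with t ht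
    exact mul_ne_zero two_ne_zero (sub_ne_zero.mpr ht)
  · simpa [hfs] using (hf.self_of_nhds.continuousAt.tendsto).mono_left nhdsWithin_le_nhds
  · exact tendsto_nhdsWithin_of_tendsto_nhds <| Continuous.tendsto' (by fun_prop) s _ (by simp)
  · refine ((hasDerivAt_iff_tendsto_slope.mp hf').div_const 2).congr fun t => ?_
    rw [slope_def_field, hf's, sub_zero, div_div, mul_comm]

theorem HasDerivAt.tendsto_sub_div_ofReal_sub {f : ℝ → ℂ} {f' : ℂ} {s : ℝ}
    (hf : HasDerivAt f f' s) :
    Tendsto (fun t => (f t - f s) / ((t : ℂ) - s)) (𝓝[≠] s) (𝓝 f') :=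
  hf.tendsto_slope.congr fun t => by
    rw [slope, vsub_eq_sub, real_smul, ofReal_inv, ofReal_sub, inv_mul_eq_div]

theorem HasDerivAt.im_const_mul_conj {f : ℝ → ℂ} {f' : ℂ} {x : ℝ} (c : ℂ)
    (hf : HasDerivAt f f' x) :
    HasDerivAt (fun t => (c * conj (f t)).im) (c * conj f').im x :=
  imCLM.hasFDerivAt.comp_hasDerivAt x (hf.star.const_mul c)

/-- Finite diagonal limit of the kernel `M⁽²⁾`:
`Im(z'(s)(conj z(s) - conj z(t)))/(conj z(s) - conj z(t))²
  → Im(z''(s) conj z'(s))/(2 conj z'(s)²)` as `t → s`. -/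
theorem double_layer_kernel_M2_diagonal_limit (z z' : ℝ → ℂ) (z'' : ℂ) (s : ℝ)
    (hz : ∀ᶠ t in nhds s, HasDerivAt z (z' t) t)
    (hz'' : HasDerivAt z' z'' s) (h0 : z' s ≠ 0) :
    Filter.Tendsto (fun t : ℝ =>
        (((z' s * (starRingEnd ℂ (z s) - starRingEnd ℂ (z t))).im : ℂ)
          / (starRingEnd ℂ (z s) - starRingEnd ℂ (z t)) ^ 2))
      (nhdsWithin s {s}ᶜ)
      (nhds (((z'' * starRingEnd ℂ (z' s)).im : ℂ)
        / (2 * (starRingEnd ℂ (z' s)) ^ 2))) := by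
  simp_rw [← map_sub]
  have hz_sub : ∀ᶠ t in 𝓝 s, HasDerivAt (fun t => z s - z t) (-z' t) t := by
    filter_upwards [hz] with t ht
    simpa using ht.const_sub (z s)
  have hnum : Tendsto (fun t => (z' s * conj (z s - z t)).im / (t - s) ^ 2) (𝓝[≠] s)
      (𝓝 ((z'' * conj (z' s)).im / 2)) := by
    convert tendsto_div_sub_sq_nhdsNE (hz_sub.mono fun t ht => ht.im_const_mul_conj (z' s))
      (hz''.neg.im_const_mul_conj (z' s)) (by simp) ?_ using 3
    · simp [mul_im]; ring
    · simp [mul_im]; ring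
  have hnumC : Tendsto (fun t => ((z' s * conj (z s - z t)).im : ℂ) / ((t : ℂ) - s) ^ 2)
      (𝓝[≠] s) (𝓝 (((z'' * conj (z' s)).im : ℂ) / 2)) := by
    have h := (continuous_ofReal.tendsto _).comp hnum
    push_cast [Function.comp_def] at h
    exact h
  have hden : Tendsto (fun t => conj (z s - z t) / ((t : ℂ) - s)) (𝓝[≠] s)
      (𝓝 (-conj (z' s))) := by
    simpa using (hz_sub.self_of_nhds.star).tendsto_sub_div_ofReal_sub
  convert hnumC.div_sq_of_div_sq hden (by simpa using h0) using 2
  ring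
end
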